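/- arXiv:2604.26484 — 11 statements merged into one kernel-verified Lean document; each statement's English description precedes it below -/
import Mathlib

section
/- For every X ∈ 𝓕, setting W = Xᵀφ(X) ∈ ℝ^{p×p}, one has 𝒜(X)ᵀ φ(𝒜(X)) = (9/4)W − (3/2)W² + (1/4)W³; equivalently, C(𝒜(X)) = (9/4)Xᵀφ(X) − (3/2)(Xᵀφ(X))² + (1/4)(Xᵀφ(X))³ − I_p. -/
open Matrix

attribute [local instance] Matrix.frobeniusNormedAddCommGroup Matrix.frobeniusNormedSpace

/-- Frobenius inner product `⟨A, B⟩ = tr(AᵀB)`. -/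
noncomputable def frobInner {n p : ℕ} (A B : Matrix (Fin n) (Fin p) ℝ) : ℝ :=
  (Aᵀ * B).trace

/-- The constraint map `C(X) = Xᵀ φ(X) − I_p`. -/
noncomputable def Cmap {n p : ℕ}
    (φ : Matrix (Fin n) (Fin p) ℝ →ₗ[ℝ] Matrix (Fin n) (Fin p) ℝ)
    (X : Matrix (Fin n) (Fin p) ℝ) : Matrix (Fin p) (Fin p) ℝ :=
  Xᵀ * φ X - 1

/-- The constraint dissolving operator `𝒜(X) = (3/2)X − (1/2)X φ(X)ᵀ X`. -/
noncomputable def Amap {n p : ℕ}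
    (φ : Matrix (Fin n) (Fin p) ℝ →ₗ[ℝ] Matrix (Fin n) (Fin p) ℝ)
    (X : Matrix (Fin n) (Fin p) ℝ) : Matrix (Fin n) (Fin p) ℝ :=
  (3/2 : ℝ) • X - (1/2 : ℝ) • (X * (φ X)ᵀ * X)

/-- `𝒢 = span{X₁ᵀ X₂ : X₁, X₂ ∈ 𝓕}`. -/
noncomputable def Gspan {n p : ℕ} (𝓕 : Submodule ℝ (Matrix (Fin n) (Fin p) ℝ)) :
    Submodule ℝ (Matrix (Fin p) (Fin p) ℝ) :=
  Submodule.span ℝ {T | ∃ X₁ ∈ 𝓕, ∃ X₂ ∈ 𝓕, T = X₁ᵀ * X₂}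

theorem stmt_0 {n p : ℕ} (hn : 0 < n) (hp : 0 < p)
    (φ : Matrix (Fin n) (Fin p) ℝ →ₗ[ℝ] Matrix (Fin n) (Fin p) ℝ)
    (𝓕 : Submodule ℝ (Matrix (Fin n) (Fin p) ℝ))
    (ψ : Matrix (Fin p) (Fin p) ℝ →ₗ[ℝ] Matrix (Fin p) (Fin p) ℝ)
    (hφ𝓕 : ∀ X ∈ 𝓕, φ X ∈ 𝓕)
    (hXT : ∀ X ∈ 𝓕, ∀ T ∈ Gspan 𝓕, X * T ∈ 𝓕)
    (hφsa : ∀ A B : Matrix (Fin n) (Fin p) ℝ, frobInner (φ A) B = frobInner A (φ B))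
    (hψG : ∀ T ∈ Gspan 𝓕, ψ T ∈ Gspan 𝓕)
    (hφψ : ∀ X ∈ 𝓕, ∀ T ∈ Gspan 𝓕, φ (X * T) = φ X * ψ T)
    (hψφ : ∀ X ∈ 𝓕, ψ ((φ X)ᵀ * X) = Xᵀ * φ X)
    (X : Matrix (Fin n) (Fin p) ℝ) (hX : X ∈ 𝓕) :
    (Amap φ X)ᵀ * φ (Amap φ X) =
      (9/4 : ℝ) • (Xᵀ * φ X) - (3/2 : ℝ) • ((Xᵀ * φ X) * (Xᵀ * φ X))
        + (1/4 : ℝ) • ((Xᵀ * φ X) * (Xᵀ * φ X) * (Xᵀ * φ X)) ∧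
    Cmap φ (Amap φ X) =
      (9/4 : ℝ) • (Xᵀ * φ X) - (3/2 : ℝ) • ((Xᵀ * φ X) * (Xᵀ * φ X))
        + (1/4 : ℝ) • ((Xᵀ * φ X) * (Xᵀ * φ X) * (Xᵀ * φ X)) - 1 := by
  have hV : (φ X)ᵀ * X ∈ Gspan 𝓕 :=
    Submodule.subset_span ⟨φ X, hφ𝓕 X hX, X, hX, rfl⟩
  have h1 : φ (X * ((φ X)ᵀ * X)) = φ X * (Xᵀ * φ X) := by
    rw [hφψ X hX _ hV, hψφ X hX]
  rw [← Matrix.mul_assoc] at h1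
  have hA : φ (Amap φ X) = (3/2 : ℝ) • φ X - (1/2 : ℝ) • (φ X * (Xᵀ * φ X)) := by
    rw [Amap, map_sub, LinearMap.map_smul, LinearMap.map_smul, h1]
  have key : (Amap φ X)ᵀ * φ (Amap φ X) =
      (9/4 : ℝ) • (Xᵀ * φ X) - (3/2 : ℝ) • ((Xᵀ * φ X) * (Xᵀ * φ X))
        + (1/4 : ℝ) • ((Xᵀ * φ X) * (Xᵀ * φ X) * (Xᵀ * φ X)) := by
    rw [hA, Amap]
    simp only [Matrix.transpose_sub, Matrix.transpose_smul, Matrix.transpose_mul,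
      Matrix.transpose_transpose, Matrix.mul_sub, Matrix.sub_mul, Matrix.smul_mul, Matrix.mul_smul, mul_sub, sub_mul, smul_mul_assoc, mul_smul_comm,
      smul_smul, Matrix.mul_assoc, mul_assoc]
    module
  exact ⟨key, by rw [Cmap, key]⟩
end

section
/- For every X ∈ 𝓕, every T ∈ 𝓕, and every Z ∈ ℝ^{n×p}, one has the adjoint identity ⟨D𝒜(X)[Z], T⟩ = ⟨Z, T((3/2)I_p − (1/2)Xᵀφ(X)) − (1/2)φ(X)(XᵀT + ψ(TᵀX))⟩, where D𝒜(X)[Z] = (3/2)Z − (1/2)(Zφ(X)ᵀX + Xφ(Z)ᵀX + Xφ(X)ᵀZ) and ⟨A,B⟩ = tr(AᵀB). In other words, D𝒜(X)*[T] = T((3/2)I_p − (1/2)Xᵀφ(X)) − (1/2)φ(X)(XᵀT + ψ(TᵀX)). -/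
open Matrix

attribute [local instance] Matrix.frobeniusNormedAddCommGroup Matrix.frobeniusNormedSpace

theorem stmt_4 {n p : ℕ} (hn : 0 < n) (hp : 0 < p)
    (φ : Matrix (Fin n) (Fin p) ℝ →ₗ[ℝ] Matrix (Fin n) (Fin p) ℝ)
    (𝓕 : Submodule ℝ (Matrix (Fin n) (Fin p) ℝ))
    (ψ : Matrix (Fin p) (Fin p) ℝ →ₗ[ℝ] Matrix (Fin p) (Fin p) ℝ)
    (hφ𝓕 : ∀ X ∈ 𝓕, φ X ∈ 𝓕)
    (hXT : ∀ X ∈ 𝓕, ∀ T ∈ Gspan 𝓕, X * T ∈ 𝓕)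
    (hφsa : ∀ A B : Matrix (Fin n) (Fin p) ℝ, frobInner (φ A) B = frobInner A (φ B))
    (hψG : ∀ T ∈ Gspan 𝓕, ψ T ∈ Gspan 𝓕)
    (hφψ : ∀ X ∈ 𝓕, ∀ T ∈ Gspan 𝓕, φ (X * T) = φ X * ψ T)
    (hψφ : ∀ X ∈ 𝓕, ψ ((φ X)ᵀ * X) = Xᵀ * φ X)
    (X : Matrix (Fin n) (Fin p) ℝ) (hX : X ∈ 𝓕)
    (T : Matrix (Fin n) (Fin p) ℝ) (hT : T ∈ 𝓕)
    (Z : Matrix (Fin n) (Fin p) ℝ) :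
    frobInner ((3/2 : ℝ) • Z
        - (1/2 : ℝ) • (Z * (φ X)ᵀ * X + X * (φ Z)ᵀ * X + X * (φ X)ᵀ * Z)) T =
      frobInner Z
        (T * ((3/2 : ℝ) • (1 : Matrix (Fin p) (Fin p) ℝ) - (1/2 : ℝ) • (Xᵀ * φ X))
          - (1/2 : ℝ) • (φ X * (Xᵀ * T + ψ (Tᵀ * X)))) := by
  have hmem : Tᵀ * X ∈ Gspan 𝓕 := Submodule.subset_span ⟨T, hT, X, hX, rfl⟩
  have h2 : frobInner (X * (φ Z)ᵀ * X) T = frobInner Z (φ X * ψ (Tᵀ * X)) := by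
    rw [← hφψ X hX _ hmem, ← hφsa]
    unfold frobInner
    have e1 : (X * (φ Z)ᵀ * X)ᵀ * T = (Xᵀ * φ Z) * (Xᵀ * T) := by
      simp [Matrix.transpose_mul, Matrix.mul_assoc]
    have e2 : ((φ Z)ᵀ * (X * (Tᵀ * X)))ᵀ = (Xᵀ * T) * (Xᵀ * φ Z) := by
      simp [Matrix.transpose_mul, Matrix.mul_assoc]
    rw [e1, ← Matrix.trace_transpose ((φ Z)ᵀ * (X * (Tᵀ * X))), e2,
      Matrix.trace_mul_comm]
  have h1 : frobInner (Z * (φ X)ᵀ * X) T = frobInner Z (T * (Xᵀ * φ X)) := by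
    unfold frobInner
    have e1 : (Z * (φ X)ᵀ * X)ᵀ * T = (Xᵀ * φ X) * (Zᵀ * T) := by
      simp [Matrix.transpose_mul, Matrix.mul_assoc]
    rw [e1, Matrix.trace_mul_comm]
    simp [Matrix.mul_assoc]
  have h3 : frobInner (X * (φ X)ᵀ * Z) T = frobInner Z (φ X * (Xᵀ * T)) := by
    unfold frobInner
    congr 1
    simp [Matrix.transpose_mul, Matrix.mul_assoc]
  unfold frobInner at h1 h2 h3 ⊢
  simp only [Matrix.transpose_sub, Matrix.transpose_add, Matrix.transpose_smul,
    Matrix.sub_mul, Matrix.add_mul, Matrix.mul_sub, Matrix.mul_add, Matrix.smul_mul,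
    Matrix.mul_smul, Matrix.trace_sub, Matrix.trace_add, Matrix.trace_smul, mul_one,
    Matrix.mul_one, smul_eq_mul]
  rw [h1, h2, h3]
  ring
end

section
/- For every X ∈ 𝓕 and every direction Z ∈ 𝓕, the Fréchet derivative of the composite map C∘𝒜 at X in direction Z equals (9/4)B − (3/2)(BW + WB) + (1/4)(BW² + WBW + W²B), where B = Xᵀφ(Z) + Zᵀφ(X) and W = Xᵀφ(X). -/
/-!
With `W = Xᵀ φ(X)` and `P = (3/2) I - (1/2) W`, the rule `φ(Y T) = φ(Y) ψ(T)` together with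
`ψ(φ(X)ᵀ X) = W` gives `φ(𝒜(X)) = φ(X) P`, while `𝒜(X)ᵀ = P Xᵀ` holds outright. Polarizing
`ψ(φ(Y)ᵀ Y) = Yᵀ φ(Y)` at `Y = X + Z` turns the direction-dependent terms of `φ(D𝒜(X)[Z])` into
`φ(X) B`. By the chain rule, `D(C ∘ 𝒜)(X)[Z] = D𝒜(X)[Z]ᵀ φ(𝒜(X)) + 𝒜(X)ᵀ φ(D𝒜(X)[Z])` thus becomes
a noncommutative polynomial in the `p × p` matrices `Xᵀ φ(Z)`, `Zᵀ φ(X)` and `W`, which expands to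
the stated formula.
-/

open Matrix

attribute [local instance] Matrix.frobeniusNormedAddCommGroup Matrix.frobeniusNormedSpace

section MatrixCalculus

variable {E : Type*} [NormedAddCommGroup E] [NormedSpace ℝ E]
  {l m o : Type*} [Fintype l] [Fintype m] [Fintype o] {x : E}

theorem HasFDerivAt.matrix_mul {f : E → Matrix l m ℝ} {g : E → Matrix m o ℝ}
    {f' : E →L[ℝ] Matrix l m ℝ} {g' : E →L[ℝ] Matrix m o ℝ}
    (hf : HasFDerivAt f f' x) (hg : HasFDerivAt g g' x) :
    HasFDerivAt (fun y => f y * g y)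
      ((mulLeftLinearMap o ℝ (f x)).toContinuousLinearMap.comp g'
        + (mulRightLinearMap l ℝ (g x)).toContinuousLinearMap.comp f') x :=
  ((mulLinearMap (l := l) (m := m) (n := o) (A := ℝ) ℝ).toContinuousBilinearMap.hasFDerivAt_of_bilinear
    hf hg).congr_fderiv rfl

theorem HasFDerivAt.matrix_transpose {f : E → Matrix l m ℝ} {f' : E →L[ℝ] Matrix l m ℝ}
    (hf : HasFDerivAt f f' x) :
    HasFDerivAt (fun y => (f y)ᵀ)
      ((transposeLinearEquiv l m ℝ ℝ).toLinearMap.toContinuousLinearMap.comp f') x :=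
  (transposeLinearEquiv l m ℝ ℝ).toLinearMap.toContinuousLinearMap.hasFDerivAt.comp x hf

end MatrixCalculus

section Derivatives

variable {n p : ℕ} (φ : Matrix (Fin n) (Fin p) ℝ →ₗ[ℝ] Matrix (Fin n) (Fin p) ℝ)

/- The derivatives are typed with the product topology on matrices, the calculus lemmas with the
Frobenius one; the two agree only up to unfolding, so derivatives are compared by `change`/`rfl`
rather than by `simp`. -/
noncomputable def AmapDeriv (X : Matrix (Fin n) (Fin p) ℝ) :
    Matrix (Fin n) (Fin p) ℝ →L[ℝ] Matrix (Fin n) (Fin p) ℝ :=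
  LinearMap.toContinuousLinearMap
    { toFun := fun Z => (3/2 : ℝ) • Z - (1/2 : ℝ) • (Z * (φ X)ᵀ * X + X * (φ Z)ᵀ * X + X * (φ X)ᵀ * Z)
      map_add' := fun Z Z' => by
        simp only [map_add, transpose_add, Matrix.add_mul, Matrix.mul_add]
        module
      map_smul' := fun c Z => by
        simp only [map_smul, transpose_smul, Matrix.smul_mul, Matrix.mul_smul, RingHom.id_apply]
        module }

theorem AmapDeriv_apply (X Z : Matrix (Fin n) (Fin p) ℝ) :
    AmapDeriv φ X Z
      = (3/2 : ℝ) • Z - (1/2 : ℝ) • (Z * (φ X)ᵀ * X + X * (φ Z)ᵀ * X + X * (φ X)ᵀ * Z) :=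
  rfl

noncomputable def CmapDeriv (Y : Matrix (Fin n) (Fin p) ℝ) :
    Matrix (Fin n) (Fin p) ℝ →L[ℝ] Matrix (Fin p) (Fin p) ℝ :=
  LinearMap.toContinuousLinearMap
    { toFun := fun H => Hᵀ * φ Y + Yᵀ * φ H
      map_add' := fun H H' => by
        simp only [map_add, transpose_add, Matrix.add_mul, Matrix.mul_add]
        abel
      map_smul' := fun c H => by
        simp only [map_smul, transpose_smul, Matrix.smul_mul, Matrix.mul_smul, RingHom.id_apply,
          smul_add] }

theorem CmapDeriv_apply (Y H : Matrix (Fin n) (Fin p) ℝ) :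
    CmapDeriv φ Y H = Hᵀ * φ Y + Yᵀ * φ H :=
  rfl

theorem hasFDerivAt_Amap (X : Matrix (Fin n) (Fin p) ℝ) :
    HasFDerivAt (Amap φ) (AmapDeriv φ X) X := by
  have hφ := (LinearMap.toContinuousLinearMap φ).hasFDerivAt (x := X)
  have hid := hasFDerivAt_id (𝕜 := ℝ) X
  have hcubic := (hid.matrix_mul hφ.matrix_transpose).matrix_mul hid
  refine ((hid.const_smul (3/2 : ℝ)).sub (hcubic.const_smul (1/2 : ℝ))).congr_fderiv ?_
  ext1 Z
  change (3/2 : ℝ) • Z - (1/2 : ℝ) • (X * (φ X)ᵀ * Z + (X * (φ Z)ᵀ + Z * (φ X)ᵀ) * X)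
    = (3/2 : ℝ) • Z - (1/2 : ℝ) • (Z * (φ X)ᵀ * X + X * (φ Z)ᵀ * X + X * (φ X)ᵀ * Z)
  simp only [Matrix.add_mul]
  module

theorem hasFDerivAt_Cmap (Y : Matrix (Fin n) (Fin p) ℝ) :
    HasFDerivAt (Cmap φ) (CmapDeriv φ Y) Y := by
  have hφ := (LinearMap.toContinuousLinearMap φ).hasFDerivAt (x := Y)
  refine (((hasFDerivAt_id Y).matrix_transpose.matrix_mul hφ).sub_const 1).congr_fderiv ?_
  ext1 H
  exact add_comm (Yᵀ * φ H) (Hᵀ * φ Y)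

theorem transpose_Amap (X : Matrix (Fin n) (Fin p) ℝ) :
    (Amap φ X)ᵀ = ((3/2 : ℝ) • 1 - (1/2 : ℝ) • (Xᵀ * φ X)) * Xᵀ := by
  simp only [Amap, transpose_sub, transpose_smul, transpose_mul, transpose_transpose,
    Matrix.sub_mul, Matrix.smul_mul, Matrix.one_mul, Matrix.mul_assoc]

theorem transpose_AmapDeriv_mul (X Z : Matrix (Fin n) (Fin p) ℝ) :
    (AmapDeriv φ X Z)ᵀ * φ X
      = (3/2 : ℝ) • (Zᵀ * φ X)
        - (1/2 : ℝ) • ((Xᵀ * φ X) * (Zᵀ * φ X) + (Xᵀ * φ Z + Zᵀ * φ X) * (Xᵀ * φ X)) := by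
  simp only [AmapDeriv_apply, transpose_sub, transpose_smul, transpose_add, transpose_mul,
    transpose_transpose, Matrix.sub_mul, Matrix.smul_mul, Matrix.add_mul, Matrix.mul_assoc]
  module

end Derivatives

theorem constraint_derivative_expansion {A : Type*} [Ring A] [Algebra ℝ A] (a b W : A) :
    ((3/2 : ℝ) • b - (1/2 : ℝ) • (W * b + (a + b) * W)) * ((3/2 : ℝ) • 1 - (1/2 : ℝ) • W)
      + ((3/2 : ℝ) • 1 - (1/2 : ℝ) • W) * ((3/2 : ℝ) • a - (1/2 : ℝ) • (a * W + W * (a + b)))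
    = (9/4 : ℝ) • (a + b) - (3/2 : ℝ) • ((a + b) * W + W * (a + b))
      + (1/4 : ℝ) • ((a + b) * (W * W) + W * (a + b) * W + (W * W) * (a + b)) := by
  simp only [mul_sub, sub_mul, smul_mul_assoc, mul_smul_comm, mul_add, add_mul, mul_one, one_mul,
    mul_assoc]
  module

section StructuredMap

variable {n p : ℕ} {φ : Matrix (Fin n) (Fin p) ℝ →ₗ[ℝ] Matrix (Fin n) (Fin p) ℝ}
  {𝓕 : Submodule ℝ (Matrix (Fin n) (Fin p) ℝ)}
  {ψ : Matrix (Fin p) (Fin p) ℝ →ₗ[ℝ] Matrix (Fin p) (Fin p) ℝ}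
  {X Y Z : Matrix (Fin n) (Fin p) ℝ}

theorem transpose_mul_mem_Gspan (hX : X ∈ 𝓕) (hY : Y ∈ 𝓕) : Xᵀ * Y ∈ Gspan 𝓕 :=
  Submodule.subset_span ⟨X, hX, Y, hY, rfl⟩

theorem map_mul_transpose_map_mul (hφ𝓕 : ∀ X ∈ 𝓕, φ X ∈ 𝓕)
    (hφψ : ∀ X ∈ 𝓕, ∀ T ∈ Gspan 𝓕, φ (X * T) = φ X * ψ T)
    (hψφ : ∀ X ∈ 𝓕, ψ ((φ X)ᵀ * X) = Xᵀ * φ X) (hX : X ∈ 𝓕) (hY : Y ∈ 𝓕) :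
    φ (Y * ((φ X)ᵀ * X)) = φ Y * (Xᵀ * φ X) := by
  rw [hφψ Y hY _ (transpose_mul_mem_Gspan (hφ𝓕 X hX) hX), hψφ X hX]

theorem map_transpose_map_mul_add (hψφ : ∀ X ∈ 𝓕, ψ ((φ X)ᵀ * X) = Xᵀ * φ X)
    (hX : X ∈ 𝓕) (hZ : Z ∈ 𝓕) :
    ψ ((φ Z)ᵀ * X + (φ X)ᵀ * Z) = Xᵀ * φ Z + Zᵀ * φ X := by
  have hpolar : (φ Z)ᵀ * X + (φ X)ᵀ * Z
      = (φ (X + Z))ᵀ * (X + Z) - (φ X)ᵀ * X - (φ Z)ᵀ * Z := by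
    simp only [map_add, transpose_add, Matrix.add_mul, Matrix.mul_add]
    abel
  rw [hpolar, map_sub, map_sub, hψφ _ (𝓕.add_mem hX hZ), hψφ X hX, hψφ Z hZ]
  simp only [map_add, transpose_add, Matrix.add_mul, Matrix.mul_add]
  abel

theorem map_Amap (hφ𝓕 : ∀ X ∈ 𝓕, φ X ∈ 𝓕)
    (hφψ : ∀ X ∈ 𝓕, ∀ T ∈ Gspan 𝓕, φ (X * T) = φ X * ψ T)
    (hψφ : ∀ X ∈ 𝓕, ψ ((φ X)ᵀ * X) = Xᵀ * φ X) (hX : X ∈ 𝓕) :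
    φ (Amap φ X) = φ X * ((3/2 : ℝ) • 1 - (1/2 : ℝ) • (Xᵀ * φ X)) := by
  rw [Amap, map_sub, map_smul, map_smul, Matrix.mul_assoc,
    map_mul_transpose_map_mul hφ𝓕 hφψ hψφ hX hX, Matrix.mul_sub, Matrix.mul_smul,
    Matrix.mul_smul, Matrix.mul_one]

theorem map_AmapDeriv (hφ𝓕 : ∀ X ∈ 𝓕, φ X ∈ 𝓕)
    (hφψ : ∀ X ∈ 𝓕, ∀ T ∈ Gspan 𝓕, φ (X * T) = φ X * ψ T)
    (hψφ : ∀ X ∈ 𝓕, ψ ((φ X)ᵀ * X) = Xᵀ * φ X) (hX : X ∈ 𝓕) (hZ : Z ∈ 𝓕) :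
    φ (AmapDeriv φ X Z)
      = (3/2 : ℝ) • φ Z - (1/2 : ℝ) • (φ Z * (Xᵀ * φ X) + φ X * (Xᵀ * φ Z + Zᵀ * φ X)) := by
  rw [AmapDeriv_apply, map_sub, map_smul, map_smul, map_add, map_add, Matrix.mul_assoc,
    Matrix.mul_assoc, Matrix.mul_assoc, map_mul_transpose_map_mul hφ𝓕 hφψ hψφ hX hZ,
    hφψ X hX _ (transpose_mul_mem_Gspan (hφ𝓕 Z hZ) hX),
    hφψ X hX _ (transpose_mul_mem_Gspan (hφ𝓕 X hX) hZ), add_assoc, ← Matrix.mul_add, ← map_add,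
    map_transpose_map_mul_add hψφ hX hZ]

theorem transpose_mul_map_AmapDeriv (hφ𝓕 : ∀ X ∈ 𝓕, φ X ∈ 𝓕)
    (hφψ : ∀ X ∈ 𝓕, ∀ T ∈ Gspan 𝓕, φ (X * T) = φ X * ψ T)
    (hψφ : ∀ X ∈ 𝓕, ψ ((φ X)ᵀ * X) = Xᵀ * φ X) (hX : X ∈ 𝓕) (hZ : Z ∈ 𝓕) :
    Xᵀ * φ (AmapDeriv φ X Z)
      = (3/2 : ℝ) • (Xᵀ * φ Z)
        - (1/2 : ℝ) • ((Xᵀ * φ Z) * (Xᵀ * φ X) + (Xᵀ * φ X) * (Xᵀ * φ Z + Zᵀ * φ X)) := by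
  simp only [map_AmapDeriv hφ𝓕 hφψ hψφ hX hZ, Matrix.mul_sub, Matrix.mul_smul, Matrix.mul_add,
    Matrix.mul_assoc]

end StructuredMap

theorem stmt_5_general {n p : ℕ}
    (φ : Matrix (Fin n) (Fin p) ℝ →ₗ[ℝ] Matrix (Fin n) (Fin p) ℝ)
    (𝓕 : Submodule ℝ (Matrix (Fin n) (Fin p) ℝ))
    (ψ : Matrix (Fin p) (Fin p) ℝ →ₗ[ℝ] Matrix (Fin p) (Fin p) ℝ)
    (hφ𝓕 : ∀ X ∈ 𝓕, φ X ∈ 𝓕)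
    (hφψ : ∀ X ∈ 𝓕, ∀ T ∈ Gspan 𝓕, φ (X * T) = φ X * ψ T)
    (hψφ : ∀ X ∈ 𝓕, ψ ((φ X)ᵀ * X) = Xᵀ * φ X)
    (X : Matrix (Fin n) (Fin p) ℝ) (hX : X ∈ 𝓕) :
    ∃ D : Matrix (Fin n) (Fin p) ℝ →L[ℝ] Matrix (Fin p) (Fin p) ℝ,
      HasFDerivAt (fun Y => Cmap φ (Amap φ Y)) D X ∧
      ∀ Z ∈ 𝓕,
        D Z = (9/4 : ℝ) • (Xᵀ * φ Z + Zᵀ * φ X)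
          - (3/2 : ℝ) • ((Xᵀ * φ Z + Zᵀ * φ X) * (Xᵀ * φ X)
              + (Xᵀ * φ X) * (Xᵀ * φ Z + Zᵀ * φ X))
          + (1/4 : ℝ) • ((Xᵀ * φ Z + Zᵀ * φ X) * ((Xᵀ * φ X) * (Xᵀ * φ X))
              + (Xᵀ * φ X) * (Xᵀ * φ Z + Zᵀ * φ X) * (Xᵀ * φ X)
              + ((Xᵀ * φ X) * (Xᵀ * φ X)) * (Xᵀ * φ Z + Zᵀ * φ X)) := by
  refine ⟨(CmapDeriv φ (Amap φ X)).comp (AmapDeriv φ X),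
    (hasFDerivAt_Cmap φ _).comp X (hasFDerivAt_Amap φ X), fun Z hZ => ?_⟩
  rw [ContinuousLinearMap.comp_apply, CmapDeriv_apply, map_Amap hφ𝓕 hφψ hψφ hX, transpose_Amap,
    ← Matrix.mul_assoc (AmapDeriv φ X Z)ᵀ, Matrix.mul_assoc _ Xᵀ, transpose_AmapDeriv_mul,
    transpose_mul_map_AmapDeriv hφ𝓕 hφψ hψφ hX hZ]
  exact constraint_derivative_expansion _ _ _

theorem stmt_5 {n p : ℕ} (hn : 0 < n) (hp : 0 < p)
    (φ : Matrix (Fin n) (Fin p) ℝ →ₗ[ℝ] Matrix (Fin n) (Fin p) ℝ)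
    (𝓕 : Submodule ℝ (Matrix (Fin n) (Fin p) ℝ))
    (ψ : Matrix (Fin p) (Fin p) ℝ →ₗ[ℝ] Matrix (Fin p) (Fin p) ℝ)
    (hφ𝓕 : ∀ X ∈ 𝓕, φ X ∈ 𝓕)
    (hXT : ∀ X ∈ 𝓕, ∀ T ∈ Gspan 𝓕, X * T ∈ 𝓕)
    (hφsa : ∀ A B : Matrix (Fin n) (Fin p) ℝ, frobInner (φ A) B = frobInner A (φ B))
    (hψG : ∀ T ∈ Gspan 𝓕, ψ T ∈ Gspan 𝓕)
    (hφψ : ∀ X ∈ 𝓕, ∀ T ∈ Gspan 𝓕, φ (X * T) = φ X * ψ T)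
    (hψφ : ∀ X ∈ 𝓕, ψ ((φ X)ᵀ * X) = Xᵀ * φ X)
    (X : Matrix (Fin n) (Fin p) ℝ) (hX : X ∈ 𝓕) :
    ∃ D : Matrix (Fin n) (Fin p) ℝ →L[ℝ] Matrix (Fin p) (Fin p) ℝ,
      HasFDerivAt (fun Y => Cmap φ (Amap φ Y)) D X ∧
      ∀ Z ∈ 𝓕,
        D Z = (9/4 : ℝ) • (Xᵀ * φ Z + Zᵀ * φ X)
          - (3/2 : ℝ) • ((Xᵀ * φ Z + Zᵀ * φ X) * (Xᵀ * φ X)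
              + (Xᵀ * φ X) * (Xᵀ * φ Z + Zᵀ * φ X))
          + (1/4 : ℝ) • ((Xᵀ * φ Z + Zᵀ * φ X) * ((Xᵀ * φ X) * (Xᵀ * φ X))
              + (Xᵀ * φ X) * (Xᵀ * φ Z + Zᵀ * φ X) * (Xᵀ * φ X)
              + ((Xᵀ * φ X) * (Xᵀ * φ X)) * (Xᵀ * φ Z + Zᵀ * φ X)) :=
  stmt_5_general φ 𝓕 ψ hφ𝓕 hφψ hψφ X hX
end

section
/- Suppose L ≥ 0 satisfies ‖φ(A)‖ ≤ L‖A‖ for all A ∈ ℝ^{n×p} (Frobenius norm). Then for all Y₁, Y₂, Z ∈ ℝ^{n×p}, ‖D𝒜(Y₁)[Z] − D𝒜(Y₂)[Z]‖ ≤ (3/2)L(‖Y₁‖ + ‖Y₂‖)‖Z‖‖Y₁ − Y₂‖, where D𝒜(Y)[Z] = (3/2)Z − (1/2)(Zφ(Y)ᵀY + Yφ(Z)ᵀY + Yφ(Y)ᵀZ) is the Fréchet derivative of 𝒜 at Y in direction Z. -/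
/-!
Since `D𝒜(Y)[Z] = (3/2)Z − (1/2)g(Y, Y)` for the bilinear map
`g(Y, Y') = Zφ(Y)ᵀY' + Yφ(Z)ᵀY' + Yφ(Y')ᵀZ`, the difference of the derivatives is
`(1/2)(g(Y₂, Y₂) − g(Y₁, Y₁)) = −(1/2)(g(Y₁ − Y₂, Y₁) + g(Y₂, Y₁ − Y₂))`, and submultiplicativity
of the Frobenius norm gives `‖g(A, B)‖ ≤ 3L‖Z‖‖A‖‖B‖`.
-/

open Matrix

attribute [local instance] Matrix.frobeniusNormedAddCommGroup Matrix.frobeniusNormedSpace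

theorem norm_bilinear_apply_self_sub_le {E F : Type*} [SeminormedAddCommGroup E]
    [SeminormedAddCommGroup F] [NormedSpace ℝ E] [NormedSpace ℝ F]
    (f : E →ₗ[ℝ] E →ₗ[ℝ] F) {K : ℝ} (hf : ∀ a b, ‖f a b‖ ≤ K * ‖a‖ * ‖b‖) (x y : E) :
    ‖f x x - f y y‖ ≤ K * (‖x‖ + ‖y‖) * ‖x - y‖ := by
  have hsplit : f x x - f y y = f (x - y) x + f y (x - y) := by
    simp only [map_sub, LinearMap.sub_apply]
    abel
  calc ‖f x x - f y y‖ ≤ ‖f (x - y) x‖ + ‖f y (x - y)‖ := hsplit ▸ norm_add_le _ _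
    _ ≤ K * ‖x - y‖ * ‖x‖ + K * ‖y‖ * ‖x - y‖ := add_le_add (hf _ _) (hf _ _)
    _ = K * (‖x‖ + ‖y‖) * ‖x - y‖ := by ring

theorem Matrix.frobenius_norm_mul_mul_le {l m k q : Type*} [Fintype l] [Fintype m] [Fintype k]
    [Fintype q] (A : Matrix l m ℝ) (B : Matrix m k ℝ) (C : Matrix k q ℝ) :
    ‖A * B * C‖ ≤ ‖A‖ * ‖B‖ * ‖C‖ :=
  (frobenius_norm_mul _ _).trans <|
    mul_le_mul_of_nonneg_right (frobenius_norm_mul _ _) (norm_nonneg _)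

section

variable {n p : ℕ} (φ : Matrix (Fin n) (Fin p) ℝ →ₗ[ℝ] Matrix (Fin n) (Fin p) ℝ)

theorem frobenius_norm_mul_transpose_mul_le {L : ℝ}
    (hL : ∀ A : Matrix (Fin n) (Fin p) ℝ, ‖φ A‖ ≤ L * ‖A‖) (A B C : Matrix (Fin n) (Fin p) ℝ) :
    ‖A * (φ B)ᵀ * C‖ ≤ L * ‖A‖ * ‖B‖ * ‖C‖ :=
  calc ‖A * (φ B)ᵀ * C‖ ≤ ‖A‖ * ‖φ B‖ * ‖C‖ := by
        simpa only [frobenius_norm_transpose] using frobenius_norm_mul_mul_le A (φ B)ᵀ C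
    _ ≤ ‖A‖ * (L * ‖B‖) * ‖C‖ := by gcongr; exact hL B
    _ = L * ‖A‖ * ‖B‖ * ‖C‖ := by ring

/-- The quadratic part of `D𝒜(Y)[Z]`, polarized in `Y`. -/
noncomputable def derivQuadForm (Z : Matrix (Fin n) (Fin p) ℝ) :
    Matrix (Fin n) (Fin p) ℝ →ₗ[ℝ] Matrix (Fin n) (Fin p) ℝ →ₗ[ℝ] Matrix (Fin n) (Fin p) ℝ :=
  LinearMap.mk₂ ℝ (fun Y Y' => Z * (φ Y)ᵀ * Y' + Y * (φ Z)ᵀ * Y' + Y * (φ Y')ᵀ * Z)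
    (fun _ _ _ => by simp only [map_add, transpose_add, Matrix.mul_add, Matrix.add_mul]; abel)
    (fun _ _ _ => by
      simp only [map_smul, transpose_smul, Matrix.mul_smul, Matrix.smul_mul, smul_add])
    (fun _ _ _ => by simp only [map_add, transpose_add, Matrix.mul_add, Matrix.add_mul]; abel)
    (fun _ _ _ => by
      simp only [map_smul, transpose_smul, Matrix.mul_smul, Matrix.smul_mul, smul_add])

theorem derivQuadForm_apply (Z Y Y' : Matrix (Fin n) (Fin p) ℝ) :
    derivQuadForm φ Z Y Y' = Z * (φ Y)ᵀ * Y' + Y * (φ Z)ᵀ * Y' + Y * (φ Y')ᵀ * Z :=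
  rfl

theorem norm_derivQuadForm_le {L : ℝ}
    (hL : ∀ A : Matrix (Fin n) (Fin p) ℝ, ‖φ A‖ ≤ L * ‖A‖) (Z A B : Matrix (Fin n) (Fin p) ℝ) :
    ‖derivQuadForm φ Z A B‖ ≤ 3 * L * ‖Z‖ * ‖A‖ * ‖B‖ := by
  have h₁ := frobenius_norm_mul_transpose_mul_le φ hL Z A B
  have h₂ := frobenius_norm_mul_transpose_mul_le φ hL A Z B
  have h₃ := frobenius_norm_mul_transpose_mul_le φ hL A B Z
  calc ‖derivQuadForm φ Z A B‖
      ≤ ‖Z * (φ A)ᵀ * B‖ + ‖A * (φ Z)ᵀ * B‖ + ‖A * (φ B)ᵀ * Z‖ := norm_add₃_le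
    _ ≤ 3 * L * ‖Z‖ * ‖A‖ * ‖B‖ := by linarith

end

theorem stmt_7_general {n p : ℕ}
    (φ : Matrix (Fin n) (Fin p) ℝ →ₗ[ℝ] Matrix (Fin n) (Fin p) ℝ)
    (L : ℝ)
    (hL : ∀ A : Matrix (Fin n) (Fin p) ℝ, ‖φ A‖ ≤ L * ‖A‖)
    (Y₁ Y₂ Z : Matrix (Fin n) (Fin p) ℝ) :
    ‖((3/2 : ℝ) • Z
        - (1/2 : ℝ) • (Z * (φ Y₁)ᵀ * Y₁ + Y₁ * (φ Z)ᵀ * Y₁ + Y₁ * (φ Y₁)ᵀ * Z))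
      - ((3/2 : ℝ) • Z
        - (1/2 : ℝ) • (Z * (φ Y₂)ᵀ * Y₂ + Y₂ * (φ Z)ᵀ * Y₂ + Y₂ * (φ Y₂)ᵀ * Z))‖
      ≤ (3/2 : ℝ) * L * (‖Y₁‖ + ‖Y₂‖) * ‖Z‖ * ‖Y₁ - Y₂‖ := by
  set g := derivQuadForm φ Z
  have hdiff : ((3/2 : ℝ) • Z - (1/2 : ℝ) • g Y₁ Y₁) - ((3/2 : ℝ) • Z - (1/2 : ℝ) • g Y₂ Y₂)
      = -((1/2 : ℝ) • (g Y₁ Y₁ - g Y₂ Y₂)) := by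
    module
  have hg := norm_bilinear_apply_self_sub_le g (norm_derivQuadForm_le φ hL Z) Y₁ Y₂
  simp only [g, derivQuadForm_apply] at hdiff hg
  rw [hdiff, norm_neg, norm_smul, Real.norm_of_nonneg (by norm_num)]
  linarith

theorem stmt_7 {n p : ℕ} (hn : 0 < n) (hp : 0 < p)
    (φ : Matrix (Fin n) (Fin p) ℝ →ₗ[ℝ] Matrix (Fin n) (Fin p) ℝ)
    (L : ℝ) (hL0 : 0 ≤ L)
    (hL : ∀ A : Matrix (Fin n) (Fin p) ℝ, ‖φ A‖ ≤ L * ‖A‖)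
    (Y₁ Y₂ Z : Matrix (Fin n) (Fin p) ℝ) :
    ‖((3/2 : ℝ) • Z
        - (1/2 : ℝ) • (Z * (φ Y₁)ᵀ * Y₁ + Y₁ * (φ Z)ᵀ * Y₁ + Y₁ * (φ Y₁)ᵀ * Z))
      - ((3/2 : ℝ) • Z
        - (1/2 : ℝ) • (Z * (φ Y₂)ᵀ * Y₂ + Y₂ * (φ Z)ᵀ * Y₂ + Y₂ * (φ Y₂)ᵀ * Z))‖
      ≤ (3/2 : ℝ) * L * (‖Y₁‖ + ‖Y₂‖) * ‖Z‖ * ‖Y₁ - Y₂‖ :=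
  stmt_7_general φ L hL Y₁ Y₂ Z
end

section
/- For every X ∈ 𝓕 there exists T ∈ 𝒢 (namely T = (1/2)φ(X)ᵀX) such that Xᵀφ(X) = Tᵀ + ψ(T). Consequently, if there exists X₀ ∈ 𝓕 with X₀ᵀφ(X₀) = I_p, then for every X ∈ 𝓕 there exists T ∈ 𝒢 with C(X) = Tᵀ + ψ(T); i.e. C(X) lies in the subspace 𝒮₁ = {Tᵀ + ψ(T) : T ∈ 𝒢}. -/
open Matrix

attribute [local instance] Matrix.frobeniusNormedAddCommGroup Matrix.frobeniusNormedSpace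

theorem stmt_9 {n p : ℕ} (hn : 0 < n) (hp : 0 < p)
    (φ : Matrix (Fin n) (Fin p) ℝ →ₗ[ℝ] Matrix (Fin n) (Fin p) ℝ)
    (𝓕 : Submodule ℝ (Matrix (Fin n) (Fin p) ℝ))
    (ψ : Matrix (Fin p) (Fin p) ℝ →ₗ[ℝ] Matrix (Fin p) (Fin p) ℝ)
    (hφ𝓕 : ∀ X ∈ 𝓕, φ X ∈ 𝓕)
    (hXT : ∀ X ∈ 𝓕, ∀ T ∈ Gspan 𝓕, X * T ∈ 𝓕)
    (hφsa : ∀ A B : Matrix (Fin n) (Fin p) ℝ, frobInner (φ A) B = frobInner A (φ B))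
    (hψG : ∀ T ∈ Gspan 𝓕, ψ T ∈ Gspan 𝓕)
    (hφψ : ∀ X ∈ 𝓕, ∀ T ∈ Gspan 𝓕, φ (X * T) = φ X * ψ T)
    (hψφ : ∀ X ∈ 𝓕, ψ ((φ X)ᵀ * X) = Xᵀ * φ X) :
    (∀ X ∈ 𝓕, ∃ T ∈ Gspan 𝓕, Xᵀ * φ X = Tᵀ + ψ T) ∧
    ((∃ X₀ ∈ 𝓕, X₀ᵀ * φ X₀ = 1) →
      ∀ X ∈ 𝓕, ∃ T ∈ Gspan 𝓕, Cmap φ X = Tᵀ + ψ T) := by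
  have key : ∀ Y ∈ 𝓕, ((φ Y)ᵀ * Y) ∈ Gspan 𝓕 := fun Y hY =>
    Submodule.subset_span ⟨φ Y, hφ𝓕 Y hY, Y, hY, rfl⟩
  constructor
  · intro X hX
    refine ⟨(1/2 : ℝ) • ((φ X)ᵀ * X), Submodule.smul_mem _ _ (key X hX), ?_⟩
    rw [_root_.map_smul, hψφ X hX, transpose_smul, transpose_mul, transpose_transpose]
    module
  · rintro ⟨X₀, hX₀, hX₀1⟩ X hX
    refine ⟨(1/2 : ℝ) • ((φ X)ᵀ * X) - (1/2 : ℝ) • ((φ X₀)ᵀ * X₀),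
      Submodule.sub_mem _ (Submodule.smul_mem _ _ (key X hX))
        (Submodule.smul_mem _ _ (key X₀ hX₀)), ?_⟩
    rw [map_sub, _root_.map_smul, _root_.map_smul, hψφ X hX, hψφ X₀ hX₀, transpose_sub,
      transpose_smul, transpose_smul, transpose_mul, transpose_mul,
      transpose_transpose, transpose_transpose, Cmap, ← hX₀1]
    module
end

section
/- Let X ∈ 𝓜. For every T̄ ∈ 𝒢, the element Z = XT̄ belongs to 𝓕 and satisfies Xᵀφ(Z) + Zᵀφ(X) = T̄ᵀ + ψ(T̄). Consequently, the linear map Z ↦ Xᵀφ(Z) + Zᵀφ(X) maps 𝓕 onto the subspace 𝒮₁ = {Tᵀ + ψ(T) : T ∈ 𝒢}; i.e. DC(X) restricted to 𝓕 is surjective onto 𝒮₁. -/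
open Matrix

attribute [local instance] Matrix.frobeniusNormedAddCommGroup Matrix.frobeniusNormedSpace

theorem stmt_10 {n p : ℕ} (hn : 0 < n) (hp : 0 < p)
    (φ : Matrix (Fin n) (Fin p) ℝ →ₗ[ℝ] Matrix (Fin n) (Fin p) ℝ)
    (𝓕 : Submodule ℝ (Matrix (Fin n) (Fin p) ℝ))
    (ψ : Matrix (Fin p) (Fin p) ℝ →ₗ[ℝ] Matrix (Fin p) (Fin p) ℝ)
    (hφ𝓕 : ∀ X ∈ 𝓕, φ X ∈ 𝓕)
    (hXT : ∀ X ∈ 𝓕, ∀ T ∈ Gspan 𝓕, X * T ∈ 𝓕)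
    (hφsa : ∀ A B : Matrix (Fin n) (Fin p) ℝ, frobInner (φ A) B = frobInner A (φ B))
    (hψG : ∀ T ∈ Gspan 𝓕, ψ T ∈ Gspan 𝓕)
    (hφψ : ∀ X ∈ 𝓕, ∀ T ∈ Gspan 𝓕, φ (X * T) = φ X * ψ T)
    (hψφ : ∀ X ∈ 𝓕, ψ ((φ X)ᵀ * X) = Xᵀ * φ X)
    (X : Matrix (Fin n) (Fin p) ℝ) (hX : X ∈ 𝓕) (hX1 : Xᵀ * φ X = 1) :
    (∀ T ∈ Gspan 𝓕,
      X * T ∈ 𝓕 ∧ Xᵀ * φ (X * T) + (X * T)ᵀ * φ X = Tᵀ + ψ T) ∧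
    (∀ S : Matrix (Fin p) (Fin p) ℝ, (∃ T ∈ Gspan 𝓕, S = Tᵀ + ψ T) →
      ∃ Z ∈ 𝓕, Xᵀ * φ Z + Zᵀ * φ X = S) := by
  have key : ∀ T ∈ Gspan 𝓕,
      X * T ∈ 𝓕 ∧ Xᵀ * φ (X * T) + (X * T)ᵀ * φ X = Tᵀ + ψ T := by
    intro T hT
    refine ⟨hXT X hX T hT, ?_⟩
    rw [hφψ X hX T hT, Matrix.transpose_mul, ← Matrix.mul_assoc, Matrix.mul_assoc Tᵀ,
      hX1, Matrix.one_mul, Matrix.mul_one, add_comm]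
  refine ⟨key, ?_⟩
  rintro S ⟨T, hT, rfl⟩
  exact ⟨X * T, (key T hT).1, (key T hT).2⟩
end

section
/- Let X ∈ 𝓜. Then the two sets {Z ∈ 𝓕 : Xᵀφ(Z) + Zᵀφ(X) = 0} and {Z ∈ 𝓕 : ⟨Z, φ(X)(Tᵀ + ψ(T))⟩ = 0 for all T ∈ 𝒢} are equal (these are the two characterizations of the tangent space T_X𝓜). -/
/-!
Self-adjointness of `φ` and `φ(XT) = φ(X)ψ(T)` give, for `T ∈ 𝒢`,
`⟨Z, φ(X)(Tᵀ + ψ(T))⟩ = ⟨T, Xᵀφ(Z) + Zᵀφ(X)⟩`. Since `φ(𝓕) ⊆ 𝓕`, the matrix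
`Xᵀφ(Z) + Zᵀφ(X)` itself lies in `𝒢`, so testing against it forces it to vanish.
-/

open Matrix

attribute [local instance] Matrix.frobeniusNormedAddCommGroup Matrix.frobeniusNormedSpace

section FrobInner

variable {n p : ℕ}

theorem frobInner_comm (A B : Matrix (Fin n) (Fin p) ℝ) : frobInner A B = frobInner B A := by
  rw [frobInner, ← trace_transpose, transpose_mul, transpose_transpose, frobInner]

theorem frobInner_add_right (A B C : Matrix (Fin n) (Fin p) ℝ) :
    frobInner A (B + C) = frobInner A B + frobInner A C := by
  simp only [frobInner, Matrix.mul_add, trace_add]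

theorem frobInner_zero_right (A : Matrix (Fin n) (Fin p) ℝ) : frobInner A 0 = 0 := by
  simp only [frobInner, Matrix.mul_zero, trace_zero]

theorem frobInner_transpose (A B : Matrix (Fin n) (Fin p) ℝ) :
    frobInner Aᵀ Bᵀ = frobInner A B := by
  rw [frobInner_comm A, frobInner, frobInner, transpose_transpose, trace_mul_comm]

theorem frobInner_mul_right (A B : Matrix (Fin n) (Fin p) ℝ) (T : Matrix (Fin p) (Fin p) ℝ) :
    frobInner A (B * T) = frobInner (Bᵀ * A) T := by
  simp only [frobInner, transpose_mul, transpose_transpose, Matrix.mul_assoc]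

theorem frobInner_self_eq_zero_iff {A : Matrix (Fin n) (Fin p) ℝ} : frobInner A A = 0 ↔ A = 0 := by
  simpa [frobInner, conjTranspose_eq_transpose_of_trivial] using
    trace_conjTranspose_mul_self_eq_zero_iff (A := A)

end FrobInner

theorem mem_Gspan_transpose_mul {n p : ℕ} {𝓕 : Submodule ℝ (Matrix (Fin n) (Fin p) ℝ)}
    {X₁ X₂ : Matrix (Fin n) (Fin p) ℝ} (h₁ : X₁ ∈ 𝓕) (h₂ : X₂ ∈ 𝓕) : X₁ᵀ * X₂ ∈ Gspan 𝓕 :=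
  Submodule.subset_span ⟨X₁, h₁, X₂, h₂, rfl⟩

theorem frobInner_mul_transpose_add_apply {n p : ℕ}
    (φ : Matrix (Fin n) (Fin p) ℝ →ₗ[ℝ] Matrix (Fin n) (Fin p) ℝ)
    (𝓕 : Submodule ℝ (Matrix (Fin n) (Fin p) ℝ))
    (ψ : Matrix (Fin p) (Fin p) ℝ →ₗ[ℝ] Matrix (Fin p) (Fin p) ℝ)
    (hφsa : ∀ A B : Matrix (Fin n) (Fin p) ℝ, frobInner (φ A) B = frobInner A (φ B))
    (hφψ : ∀ X ∈ 𝓕, ∀ T ∈ Gspan 𝓕, φ (X * T) = φ X * ψ T)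
    {X : Matrix (Fin n) (Fin p) ℝ} (hX : X ∈ 𝓕) (Z : Matrix (Fin n) (Fin p) ℝ)
    {T : Matrix (Fin p) (Fin p) ℝ} (hT : T ∈ Gspan 𝓕) :
    frobInner Z (φ X * (Tᵀ + ψ T)) = frobInner T (Xᵀ * φ Z + Zᵀ * φ X) := by
  have hTt : frobInner Z (φ X * Tᵀ) = frobInner T (Zᵀ * φ X) := by
    rw [frobInner_mul_right, ← frobInner_transpose, transpose_mul, transpose_transpose,
      transpose_transpose, frobInner_comm]
  have hψ : frobInner Z (φ X * ψ T) = frobInner T (Xᵀ * φ Z) := by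
    rw [← hφψ X hX T hT, ← hφsa, frobInner_mul_right, frobInner_comm]
  rw [Matrix.mul_add, frobInner_add_right, hTt, hψ, frobInner_add_right, add_comm]

theorem stmt_11_general {n p : ℕ}
    (φ : Matrix (Fin n) (Fin p) ℝ →ₗ[ℝ] Matrix (Fin n) (Fin p) ℝ)
    (𝓕 : Submodule ℝ (Matrix (Fin n) (Fin p) ℝ))
    (ψ : Matrix (Fin p) (Fin p) ℝ →ₗ[ℝ] Matrix (Fin p) (Fin p) ℝ)
    (hφ𝓕 : ∀ X ∈ 𝓕, φ X ∈ 𝓕)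
    (hφsa : ∀ A B : Matrix (Fin n) (Fin p) ℝ, frobInner (φ A) B = frobInner A (φ B))
    (hφψ : ∀ X ∈ 𝓕, ∀ T ∈ Gspan 𝓕, φ (X * T) = φ X * ψ T)
    (X : Matrix (Fin n) (Fin p) ℝ) (hX : X ∈ 𝓕) :
    {Z : Matrix (Fin n) (Fin p) ℝ | Z ∈ 𝓕 ∧ Xᵀ * φ Z + Zᵀ * φ X = 0} =
    {Z : Matrix (Fin n) (Fin p) ℝ | Z ∈ 𝓕 ∧
      ∀ T ∈ Gspan 𝓕, frobInner Z (φ X * (Tᵀ + ψ T)) = 0} := by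
  ext Z
  refine and_congr_right fun hZ => ⟨fun h T hT => ?_, fun h => ?_⟩
  · rw [frobInner_mul_transpose_add_apply φ 𝓕 ψ hφsa hφψ hX Z hT, h, frobInner_zero_right]
  · have hS : Xᵀ * φ Z + Zᵀ * φ X ∈ Gspan 𝓕 :=
      add_mem (mem_Gspan_transpose_mul hX (hφ𝓕 Z hZ)) (mem_Gspan_transpose_mul hZ (hφ𝓕 X hX))
    rw [← frobInner_self_eq_zero_iff, ← frobInner_mul_transpose_add_apply φ 𝓕 ψ hφsa hφψ hX Z hS]
    exact h _ hS

theorem stmt_11 {n p : ℕ} (hn : 0 < n) (hp : 0 < p)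
    (φ : Matrix (Fin n) (Fin p) ℝ →ₗ[ℝ] Matrix (Fin n) (Fin p) ℝ)
    (𝓕 : Submodule ℝ (Matrix (Fin n) (Fin p) ℝ))
    (ψ : Matrix (Fin p) (Fin p) ℝ →ₗ[ℝ] Matrix (Fin p) (Fin p) ℝ)
    (hφ𝓕 : ∀ X ∈ 𝓕, φ X ∈ 𝓕)
    (hXT : ∀ X ∈ 𝓕, ∀ T ∈ Gspan 𝓕, X * T ∈ 𝓕)
    (hφsa : ∀ A B : Matrix (Fin n) (Fin p) ℝ, frobInner (φ A) B = frobInner A (φ B))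
    (hψG : ∀ T ∈ Gspan 𝓕, ψ T ∈ Gspan 𝓕)
    (hφψ : ∀ X ∈ 𝓕, ∀ T ∈ Gspan 𝓕, φ (X * T) = φ X * ψ T)
    (hψφ : ∀ X ∈ 𝓕, ψ ((φ X)ᵀ * X) = Xᵀ * φ X)
    (X : Matrix (Fin n) (Fin p) ℝ) (hX : X ∈ 𝓕) (hX1 : Xᵀ * φ X = 1) :
    {Z : Matrix (Fin n) (Fin p) ℝ | Z ∈ 𝓕 ∧ Xᵀ * φ Z + Zᵀ * φ X = 0} =
    {Z : Matrix (Fin n) (Fin p) ℝ | Z ∈ 𝓕 ∧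
      ∀ T ∈ Gspan 𝓕, frobInner Z (φ X * (Tᵀ + ψ T)) = 0} :=
  stmt_11_general φ 𝓕 ψ hφ𝓕 hφsa hφψ X hX
end

section
/- Let X ∈ 𝓜. Then: (a) for every Z ∈ 𝓕, D𝒜(X)[D𝒜(X)[Z]] = D𝒜(X)[Z], where D𝒜(X)[Z] = (3/2)Z − (1/2)(Zφ(X)ᵀX + Xφ(Z)ᵀX + Xφ(X)ᵀZ); and (b) for every T ∈ 𝓕, P(P(T)) = P(T), where P(T) := T((3/2)I_p − (1/2)Xᵀφ(X)) − (1/2)φ(X)(XᵀT + ψ(TᵀX)) is the adjoint D𝒜(X)*[T]. That is, D𝒜(X) and D𝒜(X)* are idempotent on 𝓕. -/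
open Matrix

attribute [local instance] Matrix.frobeniusNormedAddCommGroup Matrix.frobeniusNormedSpace

/-- The Fréchet derivative of `𝒜` at `X` in direction `Z`. -/
noncomputable def DAmap {n p : ℕ}
    (φ : Matrix (Fin n) (Fin p) ℝ →ₗ[ℝ] Matrix (Fin n) (Fin p) ℝ)
    (X Z : Matrix (Fin n) (Fin p) ℝ) : Matrix (Fin n) (Fin p) ℝ :=
  (3/2 : ℝ) • Z - (1/2 : ℝ) • (Z * (φ X)ᵀ * X + X * (φ Z)ᵀ * X + X * (φ X)ᵀ * Z)

/-- The adjoint `D𝒜(X)*[T]`. -/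
noncomputable def DAstar {n p : ℕ}
    (φ : Matrix (Fin n) (Fin p) ℝ →ₗ[ℝ] Matrix (Fin n) (Fin p) ℝ)
    (ψ : Matrix (Fin p) (Fin p) ℝ →ₗ[ℝ] Matrix (Fin p) (Fin p) ℝ)
    (X T : Matrix (Fin n) (Fin p) ℝ) : Matrix (Fin n) (Fin p) ℝ :=
  T * ((3/2 : ℝ) • (1 : Matrix (Fin p) (Fin p) ℝ) - (1/2 : ℝ) • (Xᵀ * φ X))
    - (1/2 : ℝ) • (φ X * (Xᵀ * T + ψ (Tᵀ * X)))

theorem stmt_13 {n p : ℕ} (hn : 0 < n) (hp : 0 < p)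
    (φ : Matrix (Fin n) (Fin p) ℝ →ₗ[ℝ] Matrix (Fin n) (Fin p) ℝ)
    (𝓕 : Submodule ℝ (Matrix (Fin n) (Fin p) ℝ))
    (ψ : Matrix (Fin p) (Fin p) ℝ →ₗ[ℝ] Matrix (Fin p) (Fin p) ℝ)
    (hφ𝓕 : ∀ X ∈ 𝓕, φ X ∈ 𝓕)
    (hXT : ∀ X ∈ 𝓕, ∀ T ∈ Gspan 𝓕, X * T ∈ 𝓕)
    (hφsa : ∀ A B : Matrix (Fin n) (Fin p) ℝ, frobInner (φ A) B = frobInner A (φ B))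
    (hψG : ∀ T ∈ Gspan 𝓕, ψ T ∈ Gspan 𝓕)
    (hφψ : ∀ X ∈ 𝓕, ∀ T ∈ Gspan 𝓕, φ (X * T) = φ X * ψ T)
    (hψφ : ∀ X ∈ 𝓕, ψ ((φ X)ᵀ * X) = Xᵀ * φ X)
    (X : Matrix (Fin n) (Fin p) ℝ) (hX : X ∈ 𝓕) (hX1 : Xᵀ * φ X = 1) :
    (∀ Z ∈ 𝓕, DAmap φ X (DAmap φ X Z) = DAmap φ X Z) ∧
    (∀ T ∈ 𝓕, DAstar φ ψ X (DAstar φ ψ X T) = DAstar φ ψ X T) := by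
  have hX1' : (φ X)ᵀ * X = 1 := by
    have h := congrArg Matrix.transpose hX1
    simpa [Matrix.transpose_mul] using h
  have gen : ∀ A ∈ 𝓕, ∀ B ∈ 𝓕, Aᵀ * B ∈ Gspan 𝓕 := by
    intro A hA B hB
    exact Submodule.subset_span ⟨A, hA, B, hB, rfl⟩
  -- polarization of hψφ
  have pol : ∀ A ∈ 𝓕, ∀ B ∈ 𝓕,
      ψ ((φ A)ᵀ * B) + ψ ((φ B)ᵀ * A) = Aᵀ * φ B + Bᵀ * φ A := by
    intro A hA B hB
    have hL : ψ ((φ (A + B))ᵀ * (A + B)) =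
        ψ ((φ A)ᵀ * A) + ψ ((φ A)ᵀ * B) + ψ ((φ B)ᵀ * A) + ψ ((φ B)ᵀ * B) := by
      rw [map_add φ, Matrix.transpose_add, Matrix.add_mul, Matrix.mul_add,
        Matrix.mul_add, map_add, map_add, map_add]
      abel
    have hR : (A + B)ᵀ * φ (A + B) =
        Aᵀ * φ A + Aᵀ * φ B + Bᵀ * φ A + Bᵀ * φ B := by
      rw [map_add φ, Matrix.transpose_add, Matrix.add_mul, Matrix.mul_add,
        Matrix.mul_add]
      abel
    have h := hψφ (A + B) (add_mem hA hB)
    rw [hL, hR, hψφ A hA, hψφ B hB] at h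
    calc ψ ((φ A)ᵀ * B) + ψ ((φ B)ᵀ * A)
        = Aᵀ * φ A + ψ ((φ A)ᵀ * B) + ψ ((φ B)ᵀ * A) + Bᵀ * φ B
            - Aᵀ * φ A - Bᵀ * φ B := by abel
      _ = Aᵀ * φ A + Aᵀ * φ B + Bᵀ * φ A + Bᵀ * φ B - Aᵀ * φ A - Bᵀ * φ B := by
            rw [h]
      _ = Aᵀ * φ B + Bᵀ * φ A := by abel
  constructor
  · -- part (a)
    intro Z hZ
    set S : Matrix (Fin p) (Fin p) ℝ := (φ Z)ᵀ * X + (φ X)ᵀ * Z with hSdef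
    have hSG : S ∈ Gspan 𝓕 :=
      add_mem (gen (φ Z) (hφ𝓕 Z hZ) X hX) (gen (φ X) (hφ𝓕 X hX) Z hZ)
    have hψS : ψ S = Xᵀ * φ Z + Zᵀ * φ X := by
      have h := pol X hX Z hZ
      rw [hSdef, map_add, add_comm (ψ ((φ Z)ᵀ * X)), h]
    have hψST : (ψ S)ᵀ = S := by
      rw [hψS, hSdef]
      simp [Matrix.transpose_add, Matrix.transpose_mul]
    have hW : DAmap φ X Z = Z - (1/2 : ℝ) • (X * S) := by
      rw [DAmap, Matrix.mul_assoc Z, hX1', Matrix.mul_one, hSdef, Matrix.mul_add,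
        ← Matrix.mul_assoc X ((φ Z)ᵀ), ← Matrix.mul_assoc X ((φ X)ᵀ)]
      module
    have hφW : φ (DAmap φ X Z) = φ Z - (1/2 : ℝ) • (φ X * ψ S) := by
      rw [hW, map_sub, _root_.map_smul, hφψ X hX S hSG]
    have hφWT : (φ (DAmap φ X Z))ᵀ = (φ Z)ᵀ - (1/2 : ℝ) • (S * (φ X)ᵀ) := by
      rw [hφW, Matrix.transpose_sub, Matrix.transpose_smul, Matrix.transpose_mul, hψST]
    have h1 : DAmap φ X Z * (φ X)ᵀ * X = DAmap φ X Z := by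
      rw [Matrix.mul_assoc, hX1', Matrix.mul_one]
    have h2 : X * (φ (DAmap φ X Z))ᵀ * X = X * (φ Z)ᵀ * X - (1/2 : ℝ) • (X * S) := by
      rw [hφWT, Matrix.mul_sub, Matrix.mul_smul, Matrix.sub_mul, Matrix.smul_mul]
      congr 1
      rw [← Matrix.mul_assoc X S, Matrix.mul_assoc (X * S), hX1', Matrix.mul_one]
    have h3 : X * (φ X)ᵀ * DAmap φ X Z = X * (φ X)ᵀ * Z - (1/2 : ℝ) • (X * S) := by
      rw [hW, Matrix.mul_sub, Matrix.mul_smul]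
      congr 1
      rw [← Matrix.mul_assoc, Matrix.mul_assoc X ((φ X)ᵀ) X, hX1', Matrix.mul_one]
    have hXS : X * S = X * (φ Z)ᵀ * X + X * (φ X)ᵀ * Z := by
      rw [hSdef, Matrix.mul_add, ← Matrix.mul_assoc, ← Matrix.mul_assoc]
    conv_lhs => rw [DAmap]
    rw [h1, h2, h3, hW, hXS]
    module
  · -- part (b)
    intro T hT
    have hP : ∀ S : Matrix (Fin n) (Fin p) ℝ,
        DAstar φ ψ X S = S - (1/2 : ℝ) • (φ X * (Xᵀ * S + ψ (Sᵀ * X))) := by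
      intro S
      rw [DAstar, hX1]
      have hone : (3/2 : ℝ) • (1 : Matrix (Fin p) (Fin p) ℝ)
          - (1/2 : ℝ) • (1 : Matrix (Fin p) (Fin p) ℝ) = 1 := by module
      rw [hone, Matrix.mul_one]
    have hUG : Tᵀ * X ∈ Gspan 𝓕 := gen T hT X hX
    have hXU : X * (Tᵀ * X) ∈ 𝓕 := hXT X hX _ hUG
    -- key identity: ψ((ψ U)ᵀ) = Uᵀ for U = Tᵀ * X
    have key := pol X hX (X * (Tᵀ * X)) hXU
    rw [hφψ X hX _ hUG] at key
    rw [← Matrix.mul_assoc ((φ X)ᵀ) X (Tᵀ * X), hX1', Matrix.one_mul] at key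
    rw [Matrix.transpose_mul (φ X) (ψ (Tᵀ * X)),
      Matrix.mul_assoc ((ψ (Tᵀ * X))ᵀ) ((φ X)ᵀ) X, hX1', Matrix.mul_one] at key
    rw [← Matrix.mul_assoc Xᵀ (φ X) (ψ (Tᵀ * X)), hX1, Matrix.one_mul] at key
    rw [Matrix.transpose_mul X (Tᵀ * X),
      Matrix.mul_assoc ((Tᵀ * X)ᵀ) Xᵀ (φ X), hX1, Matrix.mul_one] at key
    have key2 : ψ ((ψ (Tᵀ * X))ᵀ) = (Tᵀ * X)ᵀ := add_left_cancel key
    have hUTT : ((Tᵀ * X) : Matrix (Fin p) (Fin p) ℝ)ᵀ = Xᵀ * T := by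
      rw [Matrix.transpose_mul, Matrix.transpose_transpose]
    rw [hUTT] at key2
    set W := DAstar φ ψ X T with hWdef
    have hWT : W = T - (1/2 : ℝ) • (φ X * (Xᵀ * T + ψ (Tᵀ * X))) := hP T
    have g1 : Xᵀ * W = Xᵀ * T - (1/2 : ℝ) • (Xᵀ * T + ψ (Tᵀ * X)) := by
      rw [hWT, Matrix.mul_sub, Matrix.mul_smul, ← Matrix.mul_assoc, hX1, Matrix.one_mul]
    have g2 : Wᵀ * X = Tᵀ * X - (1/2 : ℝ) • (Tᵀ * X + (ψ (Tᵀ * X))ᵀ) := by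
      rw [hWT, Matrix.transpose_sub, Matrix.transpose_smul,
        Matrix.transpose_mul (φ X), Matrix.sub_mul, Matrix.smul_mul,
        Matrix.mul_assoc _ ((φ X)ᵀ) X, hX1', Matrix.mul_one,
        Matrix.transpose_add, Matrix.transpose_mul Xᵀ T,
        Matrix.transpose_transpose]
    have g3 : ψ (Wᵀ * X) = ψ (Tᵀ * X) - (1/2 : ℝ) • (ψ (Tᵀ * X) + Xᵀ * T) := by
      rw [g2, map_sub, _root_.map_smul, map_add, key2]
    have hsum : Xᵀ * W + ψ (Wᵀ * X) = 0 := by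
      rw [g1, g3]; module
    rw [hP W, hsum, Matrix.mul_zero, smul_zero, sub_zero]
end

section
/- Let X ∈ 𝓜 and Z ∈ 𝓕. Then the direction V := Xφ(Z)ᵀX + Xφ(X)ᵀZ belongs to 𝓕 and satisfies D𝒜(X)[V] = 0, where D𝒜(X)[V] = (3/2)V − (1/2)(Vφ(X)ᵀX + Xφ(V)ᵀX + Xφ(X)ᵀV) is the Fréchet derivative of 𝒜 at X applied to V. -/
open Matrix

attribute [local instance] Matrix.frobeniusNormedAddCommGroup Matrix.frobeniusNormedSpace

theorem stmt_14 {n p : ℕ} (hn : 0 < n) (hp : 0 < p)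
    (φ : Matrix (Fin n) (Fin p) ℝ →ₗ[ℝ] Matrix (Fin n) (Fin p) ℝ)
    (𝓕 : Submodule ℝ (Matrix (Fin n) (Fin p) ℝ))
    (ψ : Matrix (Fin p) (Fin p) ℝ →ₗ[ℝ] Matrix (Fin p) (Fin p) ℝ)
    (hφ𝓕 : ∀ X ∈ 𝓕, φ X ∈ 𝓕)
    (hXT : ∀ X ∈ 𝓕, ∀ T ∈ Gspan 𝓕, X * T ∈ 𝓕)
    (hφsa : ∀ A B : Matrix (Fin n) (Fin p) ℝ, frobInner (φ A) B = frobInner A (φ B))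
    (hψG : ∀ T ∈ Gspan 𝓕, ψ T ∈ Gspan 𝓕)
    (hφψ : ∀ X ∈ 𝓕, ∀ T ∈ Gspan 𝓕, φ (X * T) = φ X * ψ T)
    (hψφ : ∀ X ∈ 𝓕, ψ ((φ X)ᵀ * X) = Xᵀ * φ X)
    (X : Matrix (Fin n) (Fin p) ℝ) (hX : X ∈ 𝓕) (hX1 : Xᵀ * φ X = 1)
    (Z : Matrix (Fin n) (Fin p) ℝ) (hZ : Z ∈ 𝓕) :
    X * (φ Z)ᵀ * X + X * (φ X)ᵀ * Z ∈ 𝓕 ∧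
    DAmap φ X (X * (φ Z)ᵀ * X + X * (φ X)ᵀ * Z) = 0 := by
  have hT1 : (φ Z)ᵀ * X ∈ Gspan 𝓕 :=
    Submodule.subset_span ⟨φ Z, hφ𝓕 Z hZ, X, hX, rfl⟩
  have hT2 : (φ X)ᵀ * Z ∈ Gspan 𝓕 :=
    Submodule.subset_span ⟨φ X, hφ𝓕 X hX, Z, hZ, rfl⟩
  have hXtX : (φ X)ᵀ * X = 1 := by
    calc (φ X)ᵀ * X = (Xᵀ * φ X)ᵀ := by rw [transpose_mul, transpose_transpose]
    _ = 1 := by rw [hX1, transpose_one]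
  have hVeq : X * (φ Z)ᵀ * X + X * (φ X)ᵀ * Z = X * ((φ Z)ᵀ * X + (φ X)ᵀ * Z) := by
    simp only [Matrix.mul_add, Matrix.mul_assoc]
  have hpol : ψ ((φ Z)ᵀ * X + (φ X)ᵀ * Z) = Xᵀ * φ Z + Zᵀ * φ X := by
    have h3 := hψφ (X + Z) (add_mem hX hZ)
    rw [map_add] at h3
    have expand : (φ X + φ Z)ᵀ * (X + Z)
        = (φ X)ᵀ * X + ((φ Z)ᵀ * X + (φ X)ᵀ * Z) + (φ Z)ᵀ * Z := by
      simp only [transpose_add, Matrix.add_mul, Matrix.mul_add]; abel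
    rw [expand, map_add, map_add, hψφ X hX, hψφ Z hZ] at h3
    have expand2 : (X + Z)ᵀ * (φ X + φ Z)
        = Xᵀ * φ X + (Xᵀ * φ Z + Zᵀ * φ X) + Zᵀ * φ Z := by
      simp only [transpose_add, Matrix.add_mul, Matrix.mul_add]; abel
    rw [expand2] at h3
    exact add_left_cancel (add_right_cancel h3)
  have hφV : φ (X * (φ Z)ᵀ * X + X * (φ X)ᵀ * Z) = φ X * (Xᵀ * φ Z + Zᵀ * φ X) := by
    rw [hVeq, hφψ X hX _ (add_mem hT1 hT2), hpol]
  have hXtX' : ∀ M : Matrix (Fin p) (Fin p) ℝ, (φ X)ᵀ * (X * M) = M := by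
    intro M; rw [← Matrix.mul_assoc, hXtX, Matrix.one_mul]
  have hφV' : φ (X * ((φ Z)ᵀ * X) + X * ((φ X)ᵀ * Z)) = φ X * (Xᵀ * φ Z + Zᵀ * φ X) := by
    rw [← Matrix.mul_add, hφψ X hX _ (add_mem hT1 hT2), hpol]
  refine ⟨?_, ?_⟩
  · rw [hVeq]; exact hXT X hX _ (add_mem hT1 hT2)
  · simp only [DAmap, Matrix.mul_add, Matrix.add_mul, Matrix.mul_assoc]
    simp only [hφV', transpose_add, transpose_mul, transpose_transpose,
      Matrix.add_mul, Matrix.mul_add, Matrix.mul_assoc, hXtX, hXtX', Matrix.mul_one]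
    module
end

section
/- Let X ∈ 𝓜 and Y ∈ 𝓕. Suppose: L > 0 satisfies ‖φ(A)‖ ≤ L‖A‖ for all A ∈ ℝ^{n×p}; δ > 0 satisfies ‖Xᵀφ(Z) + Zᵀφ(X)‖ ≥ δ‖Z‖ for all Z ∈ 𝓕; α > 0 satisfies ‖X‖ + ‖Y − X‖ ≤ α/3; and ‖Y − X‖ ≤ δ/(4L). Then (3/(2αL))‖C(Y)‖ ≤ ‖Y − X‖ ≤ (2/δ)‖C(Y)‖. -/
/-! Writing `Y = X + E`, the constraint splits as `C(Y) = D(E) + Eᵀ φ(E)`, where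
`D(E) = Xᵀ φ(E) + Eᵀ φ(X)` is the differential of `C` at `X` (this uses `Xᵀ φ(X) = I`).
Every term is bounded through `‖Aᵀ φ(B)‖ ≤ L ‖A‖ ‖B‖`. Hence `‖C(Y)‖ ≤ L ‖E‖ (2‖X‖ + ‖E‖)`,
which is at most `(2αL/3) ‖E‖`; conversely `δ ‖E‖ ≤ ‖D(E)‖ ≤ ‖C(Y)‖ + L ‖E‖²`, and the
closeness assumption `L ‖E‖ ≤ δ/4` absorbs the quadratic remainder. -/

open Matrix

attribute [local instance] Matrix.frobeniusNormedAddCommGroup Matrix.frobeniusNormedSpace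

section FrobeniusBounds

variable {m n : Type*} [Fintype m] [Fintype n]

theorem frobenius_norm_transpose_mul_le {φ : Matrix m n ℝ → Matrix m n ℝ} {L : ℝ}
    (hL : ∀ A, ‖φ A‖ ≤ L * ‖A‖) (A B : Matrix m n ℝ) :
    ‖Aᵀ * φ B‖ ≤ L * (‖A‖ * ‖B‖) :=
  calc ‖Aᵀ * φ B‖ ≤ ‖A‖ * ‖φ B‖ := by
        simpa only [frobenius_norm_transpose] using frobenius_norm_mul Aᵀ (φ B)
    _ ≤ ‖A‖ * (L * ‖B‖) := mul_le_mul_of_nonneg_left (hL B) (norm_nonneg A)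
    _ = L * (‖A‖ * ‖B‖) := by ring

end FrobeniusBounds

section Cmap

variable {n p : ℕ} {φ : Matrix (Fin n) (Fin p) ℝ →ₗ[ℝ] Matrix (Fin n) (Fin p) ℝ}
  {X : Matrix (Fin n) (Fin p) ℝ}

theorem Cmap_add_of_transpose_mul_eq_one (hX1 : Xᵀ * φ X = 1) (E : Matrix (Fin n) (Fin p) ℝ) :
    Cmap φ (X + E) = (Xᵀ * φ E + Eᵀ * φ X) + Eᵀ * φ E := by
  rw [Cmap, map_add, transpose_add, Matrix.add_mul, Matrix.mul_add, Matrix.mul_add, hX1]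
  abel

theorem norm_Cmap_add_le {L : ℝ} (hX1 : Xᵀ * φ X = 1) (hL : ∀ A, ‖φ A‖ ≤ L * ‖A‖)
    (E : Matrix (Fin n) (Fin p) ℝ) :
    ‖Cmap φ (X + E)‖ ≤ L * ‖E‖ * (2 * ‖X‖ + ‖E‖) := by
  have hXE := frobenius_norm_transpose_mul_le hL X E
  have hEX := frobenius_norm_transpose_mul_le hL E X
  have hEE := frobenius_norm_transpose_mul_le hL E E
  calc ‖Cmap φ (X + E)‖ ≤ ‖Xᵀ * φ E‖ + ‖Eᵀ * φ X‖ + ‖Eᵀ * φ E‖ := by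
        rw [Cmap_add_of_transpose_mul_eq_one hX1]
        exact (norm_add_le _ _).trans (add_le_add_left (norm_add_le _ _) _)
    _ ≤ L * ‖E‖ * (2 * ‖X‖ + ‖E‖) := by linarith

theorem norm_transpose_mul_add_le_norm_Cmap_add {L : ℝ} (hX1 : Xᵀ * φ X = 1)
    (hL : ∀ A, ‖φ A‖ ≤ L * ‖A‖)
    (E : Matrix (Fin n) (Fin p) ℝ) :
    ‖Xᵀ * φ E + Eᵀ * φ X‖ ≤ ‖Cmap φ (X + E)‖ + L * ‖E‖ ^ 2 := by
  have hEE := frobenius_norm_transpose_mul_le hL E E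
  calc ‖Xᵀ * φ E + Eᵀ * φ X‖ = ‖Cmap φ (X + E) - Eᵀ * φ E‖ := by
        rw [Cmap_add_of_transpose_mul_eq_one hX1, add_sub_cancel_right]
    _ ≤ ‖Cmap φ (X + E)‖ + ‖Eᵀ * φ E‖ := norm_sub_le _ _
    _ ≤ ‖Cmap φ (X + E)‖ + L * ‖E‖ ^ 2 := by rw [sq]; linarith

end Cmap

theorem stmt_15_general {n p : ℕ}
    (φ : Matrix (Fin n) (Fin p) ℝ →ₗ[ℝ] Matrix (Fin n) (Fin p) ℝ)
    (𝓕 : Submodule ℝ (Matrix (Fin n) (Fin p) ℝ))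
    (X : Matrix (Fin n) (Fin p) ℝ) (hX : X ∈ 𝓕) (hX1 : Xᵀ * φ X = 1)
    (Y : Matrix (Fin n) (Fin p) ℝ) (hY : Y ∈ 𝓕)
    (L : ℝ) (hL0 : 0 < L)
    (hL : ∀ A : Matrix (Fin n) (Fin p) ℝ, ‖φ A‖ ≤ L * ‖A‖)
    (δ : ℝ) (hδ0 : 0 < δ)
    (hδ : ∀ Z ∈ 𝓕, δ * ‖Z‖ ≤ ‖Xᵀ * φ Z + Zᵀ * φ X‖)
    (α : ℝ) (hα0 : 0 < α)
    (hα : ‖X‖ + ‖Y - X‖ ≤ α / 3)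
    (hYX : ‖Y - X‖ ≤ δ / (4 * L)) :
    (3 / (2 * α * L)) * ‖Cmap φ Y‖ ≤ ‖Y - X‖ ∧
    ‖Y - X‖ ≤ (2 / δ) * ‖Cmap φ Y‖ := by
  obtain ⟨E, rfl⟩ : ∃ E, Y = X + E := ⟨Y - X, by abel⟩
  have hE : E ∈ 𝓕 := (𝓕.add_mem_iff_right hX).mp hY
  rw [add_sub_cancel_left] at hα hYX ⊢
  have hLE : L * ‖E‖ ≤ δ / 4 := by
    rw [le_div_iff₀ (by positivity)] at hYX
    linarith
  have hnE := norm_nonneg E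
  constructor
  · have hC := norm_Cmap_add_le hX1 hL E
    rw [div_mul_eq_mul_div, div_le_iff₀ (by positivity)]
    nlinarith [mul_nonneg hL0.le hnE]
  · have hD := (hδ E hE).trans (norm_transpose_mul_add_le_norm_Cmap_add hX1 hL E)
    rw [div_mul_eq_mul_div, le_div_iff₀ hδ0]
    nlinarith

theorem stmt_15 {n p : ℕ} (hn : 0 < n) (hp : 0 < p)
    (φ : Matrix (Fin n) (Fin p) ℝ →ₗ[ℝ] Matrix (Fin n) (Fin p) ℝ)
    (𝓕 : Submodule ℝ (Matrix (Fin n) (Fin p) ℝ))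
    (hφ𝓕 : ∀ X ∈ 𝓕, φ X ∈ 𝓕)
    (X : Matrix (Fin n) (Fin p) ℝ) (hX : X ∈ 𝓕) (hX1 : Xᵀ * φ X = 1)
    (Y : Matrix (Fin n) (Fin p) ℝ) (hY : Y ∈ 𝓕)
    (L : ℝ) (hL0 : 0 < L)
    (hL : ∀ A : Matrix (Fin n) (Fin p) ℝ, ‖φ A‖ ≤ L * ‖A‖)
    (δ : ℝ) (hδ0 : 0 < δ)
    (hδ : ∀ Z ∈ 𝓕, δ * ‖Z‖ ≤ ‖Xᵀ * φ Z + Zᵀ * φ X‖)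
    (α : ℝ) (hα0 : 0 < α)
    (hα : ‖X‖ + ‖Y - X‖ ≤ α / 3)
    (hYX : ‖Y - X‖ ≤ δ / (4 * L)) :
    (3 / (2 * α * L)) * ‖Cmap φ Y‖ ≤ ‖Y - X‖ ∧
    ‖Y - X‖ ≤ (2 / δ) * ‖Cmap φ Y‖ :=
  stmt_15_general φ 𝓕 X hX hX1 Y hY L hL0 hL δ hδ0 hδ α hα0 hα hYX
end

section
/- Let f : ℝ^{n×p} → ℝ be differentiable, let β ∈ ℝ, and define h(Y) = f(𝒜(Y)) + (β/2)‖C(Y)‖². Let X ∈ 𝓜. Then the following are equivalent: (a) for every W ∈ 𝓕, the Fréchet derivative of h at X in direction W is zero; (b) for every Z ∈ 𝓕 with Xᵀφ(Z) + Zᵀφ(X) = 0, one has ⟨∇f(X), Z⟩ = 0 (Frobenius inner product). In other words, X is a first-order stationary point of the penalty function h (restricted to 𝓕) if and only if the Euclidean gradient of f at X is orthogonal to the tangent space of 𝓜 at X. -/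
/-!
At a point `X` of `𝓜` we have `𝒜(X) = X` and `C(X) = 0`, so the penalty `‖C‖²` has zero
derivative at `X` and `Dh(X)[W] = ⟨∇f(X), P W⟩`, where `P W = W - ½ X (φ(W)ᵀX + φ(X)ᵀW)` is the
derivative of `𝒜` at `X`. The map `P` fixes every tangent vector. Conversely, by Assumption 1,
`P` maps `𝓕` into `𝓕`, and `P W` is tangent: with `K = Xᵀφ(W) + Wᵀφ(X)`, the relation
`φ(XT) = φ(X)ψ(T)` and the polarization of `ψ(φ(Y)ᵀY) = Yᵀφ(Y)` give
`Xᵀφ(P W) = Xᵀφ(W) - ½K` and `(P W)ᵀφ(X) = Wᵀφ(X) - ½K`.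
-/

open Matrix

attribute [local instance] Matrix.frobeniusNormedAddCommGroup Matrix.frobeniusNormedSpace

section MatrixCalculus

variable {𝕜 E : Type*} [RCLike 𝕜] [NormedAddCommGroup E] [NormedSpace 𝕜 E]
  {l m o : Type*} [Fintype l] [Fintype m] [Fintype o]

theorem isBoundedBilinearMap_matrix_mul :
    IsBoundedBilinearMap 𝕜 fun q : Matrix l m 𝕜 × Matrix m o 𝕜 => q.1 * q.2 where
  add_left := Matrix.add_mul
  smul_left := Matrix.smul_mul
  add_right := Matrix.mul_add
  smul_right c x y := Matrix.mul_smul x c y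
  bound := ⟨1, one_pos, fun x y => by simpa using Matrix.frobenius_norm_mul x y⟩

theorem HasFDerivAt.matrix_mul_s18 {u : E → Matrix l m 𝕜} {v : E → Matrix m o 𝕜}
    {u' : E →L[𝕜] Matrix l m 𝕜} {v' : E →L[𝕜] Matrix m o 𝕜} {x : E}
    (hu : HasFDerivAt u u' x) (hv : HasFDerivAt v v' x) :
    HasFDerivAt (fun y => u y * v y)
      ((isBoundedBilinearMap_matrix_mul.deriv (u x, v x)).comp (u'.prod v')) x := by
  exact (isBoundedBilinearMap_matrix_mul.hasFDerivAt (u x, v x)).comp x (hu.prodMk hv)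

end MatrixCalculus

theorem hasFDerivAt_norm_sq_zero {F : Type*} [NormedAddCommGroup F] [NormedSpace ℝ F] :
    HasFDerivAt (fun v : F => ‖v‖ ^ 2) (0 : F →L[ℝ] ℝ) 0 := by
  rw [hasFDerivAt_iff_isLittleO_nhds_zero]
  simpa using Asymptotics.isLittleO_norm_pow_id (E' := F) one_lt_two

theorem HasFDerivAt.norm_sq_of_eq_zero {E F : Type*} [NormedAddCommGroup E] [NormedSpace ℝ E]
    [NormedAddCommGroup F] [NormedSpace ℝ F] {g : E → F} {x : E}
    (hg : DifferentiableAt ℝ g x) (hx : g x = 0) :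
    HasFDerivAt (fun y => ‖g y‖ ^ 2) (0 : E →L[ℝ] ℝ) x := by
  have h := (hx ▸ hasFDerivAt_norm_sq_zero (F := F)).comp x hg.hasFDerivAt
  rwa [ContinuousLinearMap.zero_comp] at h

section ConstraintDissolving

variable {n p : ℕ} (φ : Matrix (Fin n) (Fin p) ℝ →ₗ[ℝ] Matrix (Fin n) (Fin p) ℝ)

theorem hasFDerivAt_Amap_s18 (Y : Matrix (Fin n) (Fin p) ℝ) :
    ∃ A' : Matrix (Fin n) (Fin p) ℝ →L[ℝ] Matrix (Fin n) (Fin p) ℝ, HasFDerivAt (Amap φ) A' Y ∧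
      ∀ W, A' W = (3/2 : ℝ) • W -
        (1/2 : ℝ) • (Y * (φ Y)ᵀ * W + Y * (φ W)ᵀ * Y + W * (φ Y)ᵀ * Y) := by
  have hφT : HasFDerivAt (fun Y => (φ Y)ᵀ)
      (LinearMap.toContinuousLinearMap ((transposeLinearEquiv _ _ ℝ ℝ).toLinearMap ∘ₗ φ)) Y := by
    exact (LinearMap.toContinuousLinearMap
      ((transposeLinearEquiv _ _ ℝ ℝ).toLinearMap ∘ₗ φ)).hasFDerivAt
  have hcubic := ((hasFDerivAt_id Y).matrix_mul_s18 hφT).matrix_mul_s18 (hasFDerivAt_id Y)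
  refine ⟨_, ((hasFDerivAt_id Y).const_smul (3/2 : ℝ)).sub (hcubic.const_smul (1/2 : ℝ)), ?_⟩
  intro W
  change (3/2 : ℝ) • W - (1/2 : ℝ) • (Y * (φ Y)ᵀ * W + (Y * (φ W)ᵀ + W * (φ Y)ᵀ) * Y) = _
  rw [Matrix.add_mul, ← add_assoc]

theorem differentiableAt_Cmap (Y : Matrix (Fin n) (Fin p) ℝ) : DifferentiableAt ℝ (Cmap φ) Y :=
  ((((transposeLinearEquiv _ _ ℝ ℝ).toLinearMap.toContinuousLinearMap.hasFDerivAt).matrix_mul_s18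
    (LinearMap.toContinuousLinearMap φ).hasFDerivAt).sub_const 1).differentiableAt

noncomputable def tangentProj (X W : Matrix (Fin n) (Fin p) ℝ) : Matrix (Fin n) (Fin p) ℝ :=
  W - (1/2 : ℝ) • (X * ((φ W)ᵀ * X + (φ X)ᵀ * W))

variable {φ}

theorem transpose_map_mul_eq_one {X : Matrix (Fin n) (Fin p) ℝ} (hX1 : Xᵀ * φ X = 1) :
    (φ X)ᵀ * X = 1 := by
  simpa using congrArg transpose hX1

theorem Amap_eq_self {X : Matrix (Fin n) (Fin p) ℝ} (hX1 : Xᵀ * φ X = 1) : Amap φ X = X := by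
  rw [Amap, Matrix.mul_assoc, transpose_map_mul_eq_one hX1, Matrix.mul_one, ← sub_smul]
  norm_num

theorem Cmap_eq_zero {X : Matrix (Fin n) (Fin p) ℝ} (hX1 : Xᵀ * φ X = 1) : Cmap φ X = 0 := by
  rw [Cmap, hX1, sub_self]

theorem fderiv_penalty_apply {f : Matrix (Fin n) (Fin p) ℝ → ℝ} (β : ℝ)
    {X : Matrix (Fin n) (Fin p) ℝ} (hf : DifferentiableAt ℝ f X) (hX1 : Xᵀ * φ X = 1)
    (W : Matrix (Fin n) (Fin p) ℝ) :
    fderiv ℝ (fun Y => f (Amap φ Y) + (β / 2) * ‖Cmap φ Y‖ ^ 2) X W =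
      fderiv ℝ f X (tangentProj φ X W) := by
  obtain ⟨A', hA, hA'⟩ := hasFDerivAt_Amap_s18 φ X
  have hfX : HasFDerivAt f (fderiv ℝ f X) (Amap φ X) := by
    rw [Amap_eq_self hX1]
    exact hf.hasFDerivAt
  have hpen := (HasFDerivAt.norm_sq_of_eq_zero (differentiableAt_Cmap φ X)
    (Cmap_eq_zero hX1)).const_mul (β / 2)
  have h : HasFDerivAt (fun Y => f (Amap φ Y) + (β / 2) * ‖Cmap φ Y‖ ^ 2)
      (fderiv ℝ f X ∘L A' + (β / 2) • 0) X := (hfX.comp X hA).fun_add hpen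
  rw [h.fderiv, smul_zero, add_zero, ContinuousLinearMap.comp_apply, hA']
  congr 1
  rw [tangentProj, Matrix.mul_assoc, Matrix.mul_assoc, Matrix.mul_assoc,
    transpose_map_mul_eq_one hX1, Matrix.mul_one, Matrix.mul_add]
  module

theorem tangentProj_eq_self {X Z : Matrix (Fin n) (Fin p) ℝ}
    (hZ : Xᵀ * φ Z + Zᵀ * φ X = 0) : tangentProj φ X Z = Z := by
  have h : (φ Z)ᵀ * X + (φ X)ᵀ * Z = 0 := by
    simpa [transpose_add, transpose_mul] using congrArg transpose hZ
  rw [tangentProj, h, Matrix.mul_zero, smul_zero, sub_zero]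

variable {𝓕 : Submodule ℝ (Matrix (Fin n) (Fin p) ℝ)}

theorem transpose_mul_mem_Gspan_s18 {X₁ X₂ : Matrix (Fin n) (Fin p) ℝ} (h₁ : X₁ ∈ 𝓕) (h₂ : X₂ ∈ 𝓕) :
    X₁ᵀ * X₂ ∈ Gspan 𝓕 :=
  Submodule.subset_span ⟨X₁, h₁, X₂, h₂, rfl⟩

theorem tangentProj_mem (hφ𝓕 : ∀ X ∈ 𝓕, φ X ∈ 𝓕) (hXT : ∀ X ∈ 𝓕, ∀ T ∈ Gspan 𝓕, X * T ∈ 𝓕)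
    {X W : Matrix (Fin n) (Fin p) ℝ} (hX : X ∈ 𝓕) (hW : W ∈ 𝓕) : tangentProj φ X W ∈ 𝓕 :=
  sub_mem hW <| Submodule.smul_mem _ _ <| hXT X hX _ <|
    add_mem (transpose_mul_mem_Gspan_s18 (hφ𝓕 W hW) hX) (transpose_mul_mem_Gspan_s18 (hφ𝓕 X hX) hW)

theorem map_transpose_mul_add_transpose_mul {ψ : Matrix (Fin p) (Fin p) ℝ →ₗ[ℝ] Matrix (Fin p) (Fin p) ℝ}
    (hψφ : ∀ X ∈ 𝓕, ψ ((φ X)ᵀ * X) = Xᵀ * φ X)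
    {X W : Matrix (Fin n) (Fin p) ℝ} (hX : X ∈ 𝓕) (hW : W ∈ 𝓕) :
    ψ ((φ W)ᵀ * X + (φ X)ᵀ * W) = Xᵀ * φ W + Wᵀ * φ X :=
  calc ψ ((φ W)ᵀ * X + (φ X)ᵀ * W)
      = ψ ((φ (X + W))ᵀ * (X + W)) - ψ ((φ X)ᵀ * X) - ψ ((φ W)ᵀ * W) := by
        simp only [map_add, transpose_add, Matrix.add_mul, Matrix.mul_add]
        abel
    _ = (X + W)ᵀ * φ (X + W) - Xᵀ * φ X - Wᵀ * φ W := by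
        rw [hψφ _ (add_mem hX hW), hψφ X hX, hψφ W hW]
    _ = Xᵀ * φ W + Wᵀ * φ X := by
        simp only [map_add, transpose_add, Matrix.add_mul, Matrix.mul_add]
        abel

theorem tangentProj_isTangent {ψ : Matrix (Fin p) (Fin p) ℝ →ₗ[ℝ] Matrix (Fin p) (Fin p) ℝ}
    (hφ𝓕 : ∀ X ∈ 𝓕, φ X ∈ 𝓕) (hφψ : ∀ X ∈ 𝓕, ∀ T ∈ Gspan 𝓕, φ (X * T) = φ X * ψ T)
    (hψφ : ∀ X ∈ 𝓕, ψ ((φ X)ᵀ * X) = Xᵀ * φ X)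
    {X W : Matrix (Fin n) (Fin p) ℝ} (hX : X ∈ 𝓕) (hX1 : Xᵀ * φ X = 1) (hW : W ∈ 𝓕) :
    Xᵀ * φ (tangentProj φ X W) + (tangentProj φ X W)ᵀ * φ X = 0 := by
  set K := Xᵀ * φ W + Wᵀ * φ X
  set S := (φ W)ᵀ * X + (φ X)ᵀ * W
  have hS : S ∈ Gspan 𝓕 :=
    add_mem (transpose_mul_mem_Gspan_s18 (hφ𝓕 W hW) hX) (transpose_mul_mem_Gspan_s18 (hφ𝓕 X hX) hW)
  have hSt : Sᵀ = K := by simp only [S, K, transpose_add, transpose_mul, transpose_transpose]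
  have hφP : φ (tangentProj φ X W) = φ W - (1/2 : ℝ) • (φ X * K) := by
    rw [tangentProj, map_sub, map_smul, hφψ X hX S hS, map_transpose_mul_add_transpose_mul hψφ hX hW]
  have h₁ : Xᵀ * φ (tangentProj φ X W) = Xᵀ * φ W - (1/2 : ℝ) • K := by
    rw [hφP, Matrix.mul_sub, Matrix.mul_smul, ← Matrix.mul_assoc, hX1, Matrix.one_mul]
  have h₂ : (tangentProj φ X W)ᵀ * φ X = Wᵀ * φ X - (1/2 : ℝ) • K := by
    rw [tangentProj, transpose_sub, transpose_smul, transpose_mul, Matrix.sub_mul, Matrix.smul_mul,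
      Matrix.mul_assoc, hX1, Matrix.mul_one, hSt]
  rw [h₁, h₂]
  module

end ConstraintDissolving

theorem stmt_18_general {n p : ℕ}
    (φ : Matrix (Fin n) (Fin p) ℝ →ₗ[ℝ] Matrix (Fin n) (Fin p) ℝ)
    (𝓕 : Submodule ℝ (Matrix (Fin n) (Fin p) ℝ))
    (ψ : Matrix (Fin p) (Fin p) ℝ →ₗ[ℝ] Matrix (Fin p) (Fin p) ℝ)
    (hφ𝓕 : ∀ X ∈ 𝓕, φ X ∈ 𝓕)
    (hXT : ∀ X ∈ 𝓕, ∀ T ∈ Gspan 𝓕, X * T ∈ 𝓕)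
    (hφψ : ∀ X ∈ 𝓕, ∀ T ∈ Gspan 𝓕, φ (X * T) = φ X * ψ T)
    (hψφ : ∀ X ∈ 𝓕, ψ ((φ X)ᵀ * X) = Xᵀ * φ X)
    (f : Matrix (Fin n) (Fin p) ℝ → ℝ) (hf : Differentiable ℝ f)
    (β : ℝ)
    (X : Matrix (Fin n) (Fin p) ℝ) (hX : X ∈ 𝓕) (hX1 : Xᵀ * φ X = 1)
    (G : Matrix (Fin n) (Fin p) ℝ)
    (hG : ∀ Z : Matrix (Fin n) (Fin p) ℝ, fderiv ℝ f X Z = frobInner G Z) :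
    (∀ W ∈ 𝓕, fderiv ℝ (fun Y => f (Amap φ Y) + (β / 2) * ‖Cmap φ Y‖ ^ 2) X W = 0) ↔
    (∀ Z ∈ 𝓕, Xᵀ * φ Z + Zᵀ * φ X = 0 → frobInner G Z = 0) := by
  simp only [fderiv_penalty_apply β (hf X) hX1, hG]
  constructor
  · intro hstat Z hZ htan
    simpa only [tangentProj_eq_self htan] using hstat Z hZ
  · intro horth W hW
    exact horth _ (tangentProj_mem hφ𝓕 hXT hX hW)
      (tangentProj_isTangent hφ𝓕 hφψ hψφ hX hX1 hW)

theorem stmt_18 {n p : ℕ} (hn : 0 < n) (hp : 0 < p)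
    (φ : Matrix (Fin n) (Fin p) ℝ →ₗ[ℝ] Matrix (Fin n) (Fin p) ℝ)
    (𝓕 : Submodule ℝ (Matrix (Fin n) (Fin p) ℝ))
    (ψ : Matrix (Fin p) (Fin p) ℝ →ₗ[ℝ] Matrix (Fin p) (Fin p) ℝ)
    (hφ𝓕 : ∀ X ∈ 𝓕, φ X ∈ 𝓕)
    (hXT : ∀ X ∈ 𝓕, ∀ T ∈ Gspan 𝓕, X * T ∈ 𝓕)
    (hφsa : ∀ A B : Matrix (Fin n) (Fin p) ℝ, frobInner (φ A) B = frobInner A (φ B))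
    (hψG : ∀ T ∈ Gspan 𝓕, ψ T ∈ Gspan 𝓕)
    (hφψ : ∀ X ∈ 𝓕, ∀ T ∈ Gspan 𝓕, φ (X * T) = φ X * ψ T)
    (hψφ : ∀ X ∈ 𝓕, ψ ((φ X)ᵀ * X) = Xᵀ * φ X)
    (f : Matrix (Fin n) (Fin p) ℝ → ℝ) (hf : Differentiable ℝ f)
    (β : ℝ)
    (X : Matrix (Fin n) (Fin p) ℝ) (hX : X ∈ 𝓕) (hX1 : Xᵀ * φ X = 1)
    (G : Matrix (Fin n) (Fin p) ℝ)
    (hG : ∀ Z : Matrix (Fin n) (Fin p) ℝ, fderiv ℝ f X Z = frobInner G Z) :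
    (∀ W ∈ 𝓕, fderiv ℝ (fun Y => f (Amap φ Y) + (β / 2) * ‖Cmap φ Y‖ ^ 2) X W = 0) ↔
    (∀ Z ∈ 𝓕, Xᵀ * φ Z + Zᵀ * φ X = 0 → frobInner G Z = 0) :=
  stmt_18_general φ 𝓕 ψ hφ𝓕 hXT hφψ hψφ f hf β X hX hX1 G hG
end
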